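/- For every integer a ≥ 2, the minimal system of generators of S(a) has exactly a + 1 elements; that is, the embedding dimension of S(a) is a + 1. -/

import Mathlib

/-!
By the Lucas recurrence, `l_{a+1} = l_a + l_{a-1}` and `l_{a+m+2} = l_{a+m+1} + l_{a+m}`, so every
`l_{a+m}` and hence every `l_a + l_{a+m}` lies in the monoid generated by
`l_a, l_a + l_0, …, l_a + l_{a-1}`: these `a + 1` distinct numbers, all in `[l_a, 2 l_a)`,
generate `S(a)`. In a submonoid of `ℕ` generated by a finite set `G ⊆ [c, 2c)`, no element of `G`
is a sum of two nonzero elements, so every generating set without `0` contains `G`, and `G` is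
the only minimal one.
-/

/-- The Lucas sequence: l 0 = 2, l 1 = 1, l (n+2) = l (n+1) + l n. -/
def lucas : ℕ → ℕ
  | 0 => 2
  | 1 => 1
  | n + 2 => lucas (n + 1) + lucas n

/-- The modified (monotone) Lucas sequence: l̃ 0 = 1, l̃ 1 = 2, l̃ n = l n for n ≥ 2. -/
def ltil : ℕ → ℕ
  | 0 => 1
  | 1 => 2
  | n + 2 => lucas (n + 2)

/-- β x : minimal number of summands in a representation of x as a sum of
modified Lucas numbers (with repetitions allowed). -/
noncomputable def beta (x : ℕ) : ℕ :=
  sInf {s : ℕ | ∃ k : ℕ, ∃ b : ℕ → ℕ,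
    x = ∑ i ∈ Finset.range (k + 1), b i * ltil i ∧ s = ∑ i ∈ Finset.range (k + 1), b i}

/-- γ x : the greatest k with l̃ k ≤ x (for x ≥ 1). -/
noncomputable def gamma (x : ℕ) : ℕ := sSup {k : ℕ | ltil k ≤ x}

/-- S a : the additive submonoid of ℕ generated by {l_a} ∪ {l_a + l_n : n ∈ ℕ}. -/
def Sset (a : ℕ) : AddSubmonoid ℕ :=
  AddSubmonoid.closure ({lucas a} ∪ {x : ℕ | ∃ n : ℕ, x = lucas a + lucas n})

/-- T a : the additive submonoid of ℕ generated by {l_a + l_n : n ∈ ℕ}. -/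
def Tset (a : ℕ) : AddSubmonoid ℕ :=
  AddSubmonoid.closure {x : ℕ | ∃ n : ℕ, x = lucas a + lucas n}

section MinimalGenerators

def IsMinimalGeneratingSet {A : Type*} [AddMonoid A] (M : AddSubmonoid A) (X : Finset A) : Prop :=
  AddSubmonoid.closure (X : Set A) = M ∧
    ∀ Y : Finset A, Y ⊂ X → AddSubmonoid.closure (Y : Set A) ≠ M

theorem IsMinimalGeneratingSet.zero_notMem {A : Type*} [AddMonoid A] [DecidableEq A]
    {M : AddSubmonoid A} {X : Finset A} (hX : IsMinimalGeneratingSet M X) : 0 ∉ X := by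
  intro h0
  refine hX.2 _ (Finset.erase_ssubset h0) ?_
  rw [← hX.1, ← AddSubmonoid.closure_insert_zero, Finset.coe_erase, Set.insert_sdiff_singleton,
    Set.insert_eq_of_mem (Finset.mem_coe.2 h0)]

theorem eq_zero_or_mem_or_two_mul_le_of_mem_closure {Z : Set ℕ} {c x : ℕ}
    (hZ : ∀ z ∈ Z, c ≤ z) (hx : x ∈ AddSubmonoid.closure Z) :
    x = 0 ∨ x ∈ Z ∨ 2 * c ≤ x := by
  induction hx using AddSubmonoid.closure_induction with
  | mem z hz => exact .inr (.inl hz)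
  | zero => exact .inl rfl
  | add y z _ _ ihy ihz =>
    have hy : y = 0 ∨ c ≤ y := by rcases ihy with h | h | h <;> grind
    have hz : z = 0 ∨ c ≤ z := by rcases ihz with h | h | h <;> grind
    rcases hy with rfl | hy
    · simpa using ihz
    rcases hz with rfl | hz
    · simpa using ihy
    · exact .inr (.inr (by omega))

variable {G X : Finset ℕ} {c : ℕ}

theorem subset_of_closure_eq_closure_of_subset_Ico (hG : (G : Set ℕ) ⊆ Set.Ico c (2 * c))
    (hX : AddSubmonoid.closure (X : Set ℕ) = AddSubmonoid.closure G) (hX0 : 0 ∉ X) :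
    G ⊆ X := by
  have hXc : ∀ x ∈ (X : Set ℕ), c ≤ x := fun x hx => by
    have hxG : x ∈ AddSubmonoid.closure (G : Set ℕ) := hX ▸ AddSubmonoid.subset_closure hx
    rcases eq_zero_or_mem_or_two_mul_le_of_mem_closure (fun g hg => (hG hg).1) hxG
      with h | h | h
    · exact absurd (h ▸ hx) hX0
    · exact (hG h).1
    · omega
  intro g hg
  have hgX : g ∈ AddSubmonoid.closure (X : Set ℕ) := hX ▸ AddSubmonoid.subset_closure hg
  obtain ⟨hcg, hg2c⟩ := hG hg
  rcases eq_zero_or_mem_or_two_mul_le_of_mem_closure hXc hgX with h | h | h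
  · omega
  · exact h
  · omega

theorem isMinimalGeneratingSet_of_subset_Ico (hG : (G : Set ℕ) ⊆ Set.Ico c (2 * c)) :
    IsMinimalGeneratingSet (AddSubmonoid.closure G) G := by
  refine ⟨rfl, fun Y hYG hY => ?_⟩
  have hY0 : 0 ∉ Y := fun h => by
    obtain ⟨hc0, h0c⟩ := hG (hYG.1 h)
    omega
  exact hYG.2 (subset_of_closure_eq_closure_of_subset_Ico hG hY hY0)

theorem IsMinimalGeneratingSet.eq_of_subset_Ico (hG : (G : Set ℕ) ⊆ Set.Ico c (2 * c))
    (hX : IsMinimalGeneratingSet (AddSubmonoid.closure G) X) : X = G := by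
  have hGX := subset_of_closure_eq_closure_of_subset_Ico hG hX.1 hX.zero_notMem
  by_contra hne
  exact hX.2 G (Finset.ssubset_iff_subset_ne.2 ⟨hGX, Ne.symm hne⟩) rfl

end MinimalGenerators

section Lucas

theorem lucas_pos : ∀ n, 0 < lucas n
  | 0 | 1 => by decide
  | n + 2 => Nat.add_pos_left (lucas_pos (n + 1)) _

theorem lucas_strictMonoOn : StrictMonoOn lucas (Set.Ici 1) :=
  strictMonoOn_of_lt_add_one Set.ordConnected_Ici fun n _ hn _ => by
    obtain ⟨k, rfl⟩ : ∃ k, n = k + 1 := ⟨n - 1, by simp at hn; omega⟩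
    exact Nat.lt_add_of_pos_right (lucas_pos k)

theorem lucas_lt_lucas {m n : ℕ} (hn : 2 ≤ n) (h : m < n) : lucas m < lucas n := by
  rcases m.eq_zero_or_pos with rfl | hm
  · calc lucas 0 < lucas 2 := by decide
      _ ≤ lucas n := lucas_strictMonoOn.monotoneOn (by simp) (by simp; omega) hn
  · exact lucas_strictMonoOn hm (by simp; omega) h

theorem lucas_injective : Function.Injective lucas := by
  have hne : ∀ {m n}, m < n → lucas m ≠ lucas n := fun {m n} h => by
    rcases (by omega : n = 1 ∨ 2 ≤ n) with rfl | hn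
    · obtain rfl : m = 0 := by omega
      decide
    · exact (lucas_lt_lucas hn h).ne
  intro m n h
  by_contra hmn
  rcases Nat.lt_or_gt_of_ne hmn with hlt | hlt
  exacts [hne hlt h, hne hlt h.symm]

end Lucas

section Generators

variable {a : ℕ}

def sGenerators (a : ℕ) : Finset ℕ :=
  insert (lucas a) ((Finset.range a).image (lucas a + lucas ·))

theorem lucas_add_mem_sGenerators {n : ℕ} (hn : n < a) : lucas a + lucas n ∈ sGenerators a :=
  Finset.mem_insert_of_mem (Finset.mem_image_of_mem _ (Finset.mem_range.2 hn))

theorem sGenerators_subset_Ico (ha : 2 ≤ a) :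
    (sGenerators a : Set ℕ) ⊆ Set.Ico (lucas a) (2 * lucas a) := by
  have := lucas_pos a
  simp only [sGenerators, Finset.coe_insert, Finset.coe_image, Finset.coe_range,
    Set.insert_subset_iff, Set.image_subset_iff, Set.mem_Ico]
  refine ⟨by omega, fun n hn => ?_⟩
  have := lucas_lt_lucas ha hn
  simp only [Set.mem_preimage, Set.mem_Ico]
  omega

theorem card_sGenerators : (sGenerators a).card = a + 1 := by
  rw [sGenerators, Finset.card_insert_of_notMem, Finset.card_image_of_injective _
    fun m n h => lucas_injective (Nat.add_left_cancel h), Finset.card_range]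
  simp only [Finset.mem_image, not_exists, not_and]
  intro n _ h
  have := lucas_pos n
  omega

theorem lucas_add_mem_closure_sGenerators (ha : 2 ≤ a) :
    ∀ m, lucas (a + m) ∈ AddSubmonoid.closure (sGenerators a : Set ℕ)
  | 0 => AddSubmonoid.subset_closure (Finset.mem_insert_self _ _)
  | 1 => by
      obtain ⟨b, rfl⟩ : ∃ b, a = b + 2 := ⟨a - 2, by omega⟩
      exact AddSubmonoid.subset_closure (lucas_add_mem_sGenerators (n := b + 1) (by omega))
  | m + 2 => add_mem (lucas_add_mem_closure_sGenerators ha (m + 1))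
      (lucas_add_mem_closure_sGenerators ha m)

theorem closure_sGenerators (ha : 2 ≤ a) :
    AddSubmonoid.closure (sGenerators a : Set ℕ) = Sset a := by
  apply le_antisymm
  · refine AddSubmonoid.closure_le.2 fun g hg => AddSubmonoid.subset_closure ?_
    simp only [sGenerators, Finset.coe_insert, Finset.coe_image, Finset.coe_range] at hg
    rcases hg with rfl | ⟨n, _, rfl⟩
    exacts [.inl rfl, .inr ⟨n, rfl⟩]
  · refine AddSubmonoid.closure_le.2 ?_
    rintro _ (rfl | ⟨n, rfl⟩)
    · exact AddSubmonoid.subset_closure (Finset.mem_insert_self _ _)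
    rcases Nat.lt_or_ge n a with hn | hn
    · exact AddSubmonoid.subset_closure (lucas_add_mem_sGenerators hn)
    · obtain ⟨m, rfl⟩ := Nat.exists_eq_add_of_le hn
      exact add_mem (AddSubmonoid.subset_closure (Finset.mem_insert_self _ _))
        (lucas_add_mem_closure_sGenerators ha m)

end Generators

theorem embedding_dimension_S (a : ℕ) (ha : 2 ≤ a) :
    (∃ X : Finset ℕ, AddSubmonoid.closure (X : Set ℕ) = Sset a ∧
      (∀ Y : Finset ℕ, Y ⊂ X → AddSubmonoid.closure (Y : Set ℕ) ≠ Sset a) ∧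
      X.card = a + 1) ∧
    ∀ X : Finset ℕ, AddSubmonoid.closure (X : Set ℕ) = Sset a →
      (∀ Y : Finset ℕ, Y ⊂ X → AddSubmonoid.closure (Y : Set ℕ) ≠ Sset a) →
      X.card = a + 1 := by
  have hbounds := sGenerators_subset_Ico ha
  rw [← closure_sGenerators ha]
  have hmin := isMinimalGeneratingSet_of_subset_Ico hbounds
  refine ⟨⟨sGenerators a, hmin.1, hmin.2, card_sGenerators⟩, fun X hX hXmin => ?_⟩
  have hXG : X = sGenerators a :=
    IsMinimalGeneratingSet.eq_of_subset_Ico hbounds ⟨hX, hXmin⟩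
  rw [hXG, card_sGenerators]
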